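/- Weak duality holds: for every α ∈ ℝ^n and every β ∈ ℝ^p, D(α) ≤ P(β). -/

import Mathlib

noncomputable section

/-- ℓ₀ "norm": number of nonzero entries, as a real number. -/
def zeroNorm {p : ℕ} (β : EuclideanSpace ℝ (Fin p)) : ℝ :=
  ((Finset.univ.filter fun j => β j ≠ 0).card : ℝ)

/-- ℓ₁ norm. -/
def oneNorm {p : ℕ} (β : EuclideanSpace ℝ (Fin p)) : ℝ := ∑ j, |β j|

/-- `X β`, where `x j` is the `j`-th column of `X`. -/
def Xmul {n p : ℕ} (x : Fin p → EuclideanSpace ℝ (Fin n))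
    (β : EuclideanSpace ℝ (Fin p)) : EuclideanSpace ℝ (Fin n) :=
  ∑ j, β j • x j

/-- Primal objective `P(β)`. -/
def Pobj {n p : ℕ} (x : Fin p → EuclideanSpace ℝ (Fin n)) (y : EuclideanSpace ℝ (Fin n))
    (l0 l1 l2 : ℝ) (β : EuclideanSpace ℝ (Fin p)) : ℝ :=
  (1/2) * ‖y - Xmul x β‖^2 + l0 * zeroNorm β + l1 * oneNorm β + l2 * ‖β‖^2

/-- Lagrangian `L(β, α)`. -/
def Lag {n p : ℕ} (x : Fin p → EuclideanSpace ℝ (Fin n)) (y : EuclideanSpace ℝ (Fin n))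
    (l0 l1 l2 : ℝ) (β : EuclideanSpace ℝ (Fin p)) (α : EuclideanSpace ℝ (Fin n)) : ℝ :=
  (inner ℝ α (Xmul x β) : ℝ) - (1/2) * ‖α‖^2 - (inner ℝ y α : ℝ)
    + l0 * zeroNorm β + l1 * oneNorm β + l2 * ‖β‖^2

/-- `η_j(α) = −⟨x_j, α⟩ / (2 λ₂)`. -/
def etav {n p : ℕ} (x : Fin p → EuclideanSpace ℝ (Fin n)) (l2 : ℝ)
    (α : EuclideanSpace ℝ (Fin n)) (j : Fin p) : ℝ :=
  -(inner ℝ (x j) α : ℝ) / (2 * l2)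

/-- Threshold `η₀ = (2√(λ₀λ₂) + λ₁)/(2λ₂)`. -/
def eta0 (l0 l1 l2 : ℝ) : ℝ := (2 * Real.sqrt (l0 * l2) + l1) / (2 * l2)

/-- Scalar function `ψ` appearing in the dual objective. -/
def psi (l0 l1 l2 : ℝ) (t : ℝ) : ℝ :=
  if eta0 l0 l1 l2 ≤ |t| then -l2 * (|t| - l1 / (2 * l2))^2 + l0 else 0

/-- Dual objective `D(α)` for the square loss. -/
def Dobj {n p : ℕ} (x : Fin p → EuclideanSpace ℝ (Fin n)) (y : EuclideanSpace ℝ (Fin n))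
    (l0 l1 l2 : ℝ) (α : EuclideanSpace ℝ (Fin n)) : ℝ :=
  -(1/2) * ‖α‖^2 - (inner ℝ y α : ℝ) + ∑ j : Fin p, psi l0 l1 l2 (etav x l2 α j)

/-- Thresholding map `𝔅`. -/
def Bth (l0 l1 l2 : ℝ) (t : ℝ) : ℝ :=
  if eta0 l0 l1 l2 ≤ |t| then Real.sign t * (|t| - l1 / (2 * l2)) else 0

/-- Primal-dual link `β(α)` with entries `β_j(α) = 𝔅(η_j(α))`. -/
def betaOf {n p : ℕ} (x : Fin p → EuclideanSpace ℝ (Fin n)) (l0 l1 l2 : ℝ)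
    (α : EuclideanSpace ℝ (Fin n)) : EuclideanSpace ℝ (Fin p) :=
  WithLp.toLp 2 (fun j => Bth l0 l1 l2 (etav x l2 α j))

/-- `(β̄, ᾱ)` is a saddle point of the Lagrangian `L`. -/
def IsSaddle {n p : ℕ} (x : Fin p → EuclideanSpace ℝ (Fin n)) (y : EuclideanSpace ℝ (Fin n))
    (l0 l1 l2 : ℝ) (βb : EuclideanSpace ℝ (Fin p)) (αb : EuclideanSpace ℝ (Fin n)) : Prop :=
  (∀ α, Lag x y l0 l1 l2 βb α ≤ Lag x y l0 l1 l2 βb αb) ∧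
  (∀ β, Lag x y l0 l1 l2 βb αb ≤ Lag x y l0 l1 l2 β αb)

/-! Weak duality is a Lagrangian sandwich `D(α) ≤ L(β, α) ≤ P(β)`. The right inequality is
completing the square: `P(β) - L(β, α) = ½‖y - Xβ + α‖²`. The left one is coordinatewise:
`ψ(t)` is the minimum over `b` of `λ₂ b² - 2λ₂ t b + λ₁|b| + λ₀ 1[b ≠ 0]`, and `η₀` is the value
of `|t|` at which the two candidate minimisers `b = 0` and `b = sign t (|t| - λ₁/(2λ₂))` tie;
with `t = η_j(α)` the linear term is `⟨x_j, α⟩ b`. -/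

section Scalar

variable {l0 l1 l2 : ℝ}

lemma eta0_eq (hl2 : 0 < l2) :
    eta0 l0 l1 l2 = l1 / (2 * l2) + Real.sqrt (l0 * l2) / l2 := by
  unfold eta0
  field_simp
  ring

lemma mul_sq_sqrt_mul_div (hl0 : 0 ≤ l0) (hl2 : 0 < l2) :
    l2 * (Real.sqrt (l0 * l2) / l2) ^ 2 = l0 := by
  rw [div_pow, Real.sq_sqrt (mul_nonneg hl0 hl2.le)]
  field_simp

lemma psi_nonpos (hl0 : 0 ≤ l0) (hl2 : 0 < l2) (t : ℝ) : psi l0 l1 l2 t ≤ 0 := by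
  unfold psi
  split_ifs with ht
  · set r := Real.sqrt (l0 * l2) / l2
    have hr : 0 ≤ r := by positivity
    have hrt : r ≤ |t| - l1 / (2 * l2) := by rw [eta0_eq hl2] at ht; linarith
    have := mul_sq_sqrt_mul_div hl0 hl2
    nlinarith [mul_le_mul_of_nonneg_left (pow_le_pow_left₀ hr hrt 2) hl2.le]
  · rfl

/-- The case `b ≠ 0` of `psi_le`, with `c = |b|` and `-t b` bounded by `-|t| |b|`. -/
lemma psi_le_of_nonneg (hl0 : 0 ≤ l0) (hl2 : 0 < l2) (t : ℝ) {c : ℝ} (hc : 0 ≤ c) :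
    psi l0 l1 l2 t ≤ l2 * (c - (|t| - l1 / (2 * l2))) ^ 2
      - l2 * (|t| - l1 / (2 * l2)) ^ 2 + l0 := by
  unfold psi
  split_ifs with ht
  · nlinarith [mul_nonneg hl2.le (sq_nonneg (c - (|t| - l1 / (2 * l2))))]
  · set r := Real.sqrt (l0 * l2) / l2
    have hrt : |t| - l1 / (2 * l2) < r := by rw [eta0_eq hl2] at ht; linarith
    have := mul_sq_sqrt_mul_div hl0 hl2
    nlinarith [mul_nonneg hl2.le (sq_nonneg (c - r)),
      mul_le_mul_of_nonneg_left (mul_le_mul_of_nonneg_right hrt.le hc) hl2.le]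

lemma psi_le (hl0 : 0 ≤ l0) (hl2 : 0 < l2) (t b : ℝ) :
    psi l0 l1 l2 t ≤ -(2 * l2 * t) * b + l0 * (if b = 0 then 0 else 1)
      + l1 * |b| + l2 * b ^ 2 := by
  by_cases hb : b = 0
  · simpa [hb] using psi_nonpos hl0 hl2 t
  · have htb : t * b ≤ |t| * |b| := by rw [← abs_mul]; exact le_abs_self _
    have key := psi_le_of_nonneg (l1 := l1) hl0 hl2 t (abs_nonneg b)
    obtain ⟨u, rfl⟩ : ∃ u, l1 = 2 * l2 * u := ⟨l1 / (2 * l2), by field_simp⟩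
    rw [mul_div_cancel_left₀ u (by positivity)] at key
    rw [if_neg hb, ← sq_abs b]
    nlinarith [mul_le_mul_of_nonneg_left htb hl2.le]

end Scalar

section Vector

variable {n p : ℕ} (x : Fin p → EuclideanSpace ℝ (Fin n))

lemma inner_Xmul (α : EuclideanSpace ℝ (Fin n)) (β : EuclideanSpace ℝ (Fin p)) :
    inner ℝ α (Xmul x β) = ∑ j, inner ℝ (x j) α * β j := by
  simp only [Xmul, inner_sum, real_inner_smul_right, real_inner_comm α, mul_comm]

lemma zeroNorm_eq_sum (β : EuclideanSpace ℝ (Fin p)) :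
    zeroNorm β = ∑ j, if β j = 0 then (0 : ℝ) else 1 := by
  rw [zeroNorm, Finset.card_filter, Nat.cast_sum]
  exact Finset.sum_congr rfl fun j _ => by split_ifs <;> simp_all

lemma Lag_eq_sum (y : EuclideanSpace ℝ (Fin n)) (l0 l1 l2 : ℝ)
    (β : EuclideanSpace ℝ (Fin p)) (α : EuclideanSpace ℝ (Fin n)) :
    Lag x y l0 l1 l2 β α = -(1/2) * ‖α‖ ^ 2 - inner ℝ y α
      + ∑ j, (inner ℝ (x j) α * β j + l0 * (if β j = 0 then 0 else 1)
        + l1 * |β j| + l2 * β j ^ 2) := by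
  rw [Lag, inner_Xmul, zeroNorm_eq_sum, oneNorm, EuclideanSpace.real_norm_sq_eq β]
  simp only [Finset.sum_add_distrib, Finset.mul_sum]
  ring

lemma Dobj_le_Lag (y : EuclideanSpace ℝ (Fin n)) {l0 l1 l2 : ℝ} (hl0 : 0 ≤ l0) (hl2 : 0 < l2)
    (α : EuclideanSpace ℝ (Fin n)) (β : EuclideanSpace ℝ (Fin p)) :
    Dobj x y l0 l1 l2 α ≤ Lag x y l0 l1 l2 β α := by
  rw [Dobj, Lag_eq_sum]
  gcongr with j
  have hη : -(2 * l2 * etav x l2 α j) = inner ℝ (x j) α := by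
    unfold etav
    field_simp
  simpa only [hη] using psi_le hl0 hl2 (etav x l2 α j) (β j)

lemma Pobj_sub_Lag (y : EuclideanSpace ℝ (Fin n)) (l0 l1 l2 : ℝ)
    (β : EuclideanSpace ℝ (Fin p)) (α : EuclideanSpace ℝ (Fin n)) :
    Pobj x y l0 l1 l2 β - Lag x y l0 l1 l2 β α = (1/2) * ‖y - Xmul x β + α‖ ^ 2 := by
  rw [Pobj, Lag, norm_add_sq_real, inner_sub_left, real_inner_comm α, real_inner_comm α]
  ring

lemma Lag_le_Pobj (y : EuclideanSpace ℝ (Fin n)) (l0 l1 l2 : ℝ)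
    (β : EuclideanSpace ℝ (Fin p)) (α : EuclideanSpace ℝ (Fin n)) :
    Lag x y l0 l1 l2 β α ≤ Pobj x y l0 l1 l2 β := by
  have := Pobj_sub_Lag x y l0 l1 l2 β α
  nlinarith [sq_nonneg ‖y - Xmul x β + α‖]

end Vector

theorem stmt6_general (n p : ℕ) (x : Fin p → EuclideanSpace ℝ (Fin n))
    (y : EuclideanSpace ℝ (Fin n)) (l0 l1 l2 : ℝ)
    (hl0 : 0 < l0) (hl2 : 0 < l2)
    (α : EuclideanSpace ℝ (Fin n)) (β : EuclideanSpace ℝ (Fin p)) :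
    Dobj x y l0 l1 l2 α ≤ Pobj x y l0 l1 l2 β :=
  (Dobj_le_Lag x y hl0.le hl2 α β).trans (Lag_le_Pobj x y l0 l1 l2 β α)

/-- weak duality `D(α) ≤ P(β)`. -/
theorem stmt6 (n p : ℕ) (x : Fin p → EuclideanSpace ℝ (Fin n))
    (y : EuclideanSpace ℝ (Fin n)) (l0 l1 l2 : ℝ)
    (hl0 : 0 < l0) (hl1 : 0 ≤ l1) (hl2 : 0 < l2)
    (α : EuclideanSpace ℝ (Fin n)) (β : EuclideanSpace ℝ (Fin p)) :
    Dobj x y l0 l1 l2 α ≤ Pobj x y l0 l1 l2 β :=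
  stmt6_general n p x y l0 l1 l2 hl0 hl2 α β
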